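/- (Discrete-time version of Theorem 2 of the paper.) Let X be a nonempty finite type and φ an operator on probability distributions on X that satisfies the Pythagorean identity and such that every distribution r is absolutely continuous with respect to φ r. Let n : ℕ and let T : Fin n → (stochastic matrices on X) be a protocol such that each T i satisfies φ((T i) r) = (T i)(φ r) for every distribution r, and each T i has a stationary distribution π i lying in the image of φ (T i (π i) = π i). Given an initial distribution p, define p₀ = p and p_{i+1} = T i (p_i), and let Σ = ∑_{i=0}^{n−1} [D(p_i‖π i) − D(p_{i+1}‖π i)]. Then Σ = [D(p₀‖φ p₀) − D(p_n‖φ p_n)] + ∑_{i=0}^{n−1} [D(φ p_i‖π i) − D((T i)(φ p_i)‖π i)], and moreover D(p₀‖φ p₀) − D(p_n‖φ p_n) ≥ 0. -/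

import Mathlib

open Finset

/-- A probability distribution on a finite type. -/
def IsDist {X : Type*} [Fintype X] (p : X → ℝ) : Prop :=
  (∀ x, 0 ≤ p x) ∧ ∑ x, p x = 1

/-- Kullback–Leibler divergence (terms with `p x = 0` contribute `0`,
since `0 * Real.log _ = 0`). -/
noncomputable def KL {X : Type*} [Fintype X] (p q : X → ℝ) : ℝ :=
  ∑ x, p x * Real.log (p x / q x)

/-- Absolute continuity of `p` with respect to `q`. -/
def AbsCont {X : Type*} [Fintype X] (p q : X → ℝ) : Prop :=
  ∀ x, q x = 0 → p x = 0

/-- A (column-)stochastic matrix on a finite type. -/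
def IsStochastic {X : Type*} [Fintype X] (T : X → X → ℝ) : Prop :=
  (∀ x x', 0 ≤ T x x') ∧ ∀ x', ∑ x, T x x' = 1

/-- Action of a stochastic matrix on a distribution. -/
noncomputable def mapply {X : Type*} [Fintype X] (T : X → X → ℝ) (p : X → ℝ) : X → ℝ :=
  fun x => ∑ x', T x x' * p x'

/-- `φ` satisfies the Pythagorean identity. -/
def Pythagorean {X : Type*} [Fintype X] (φ : (X → ℝ) → (X → ℝ)) : Prop :=
  ∀ p q : X → ℝ, IsDist p → IsDist q → (∃ r, IsDist r ∧ φ r = q) →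
    KL p q = KL p (φ p) + KL (φ p) q

/-- The log-sum inequality. -/
lemma log_sum_ineq {ι : Type*} (s : Finset ι) (a b : ι → ℝ)
    (ha : ∀ i ∈ s, 0 ≤ a i) (hb : ∀ i ∈ s, 0 ≤ b i)
    (hab : ∀ i ∈ s, b i = 0 → a i = 0) :
    (∑ i ∈ s, a i) * Real.log ((∑ i ∈ s, a i) / (∑ i ∈ s, b i)) ≤
      ∑ i ∈ s, a i * Real.log (a i / b i) := by
  set A := ∑ i ∈ s, a i with hA
  set B := ∑ i ∈ s, b i with hBdef
  rcases eq_or_lt_of_le (Finset.sum_nonneg hb) with hB | hB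
  · -- B = 0
    have hb0 : ∀ i ∈ s, b i = 0 :=
      (Finset.sum_eq_zero_iff_of_nonneg hb).1 hB.symm
    have ha0 : ∀ i ∈ s, a i = 0 := fun i hi => hab i hi (hb0 i hi)
    have hA0 : A = 0 := Finset.sum_eq_zero ha0
    rw [hA0, zero_mul]
    exact le_of_eq (Finset.sum_eq_zero fun i hi => by rw [ha0 i hi, zero_mul]).symm
  · -- 0 < B
    have hBne : B ≠ 0 := ne_of_gt hB
    have hJ := Real.convexOn_mul_log.map_sum_le (t := s)
      (w := fun i => b i / B) (p := fun i => if b i = 0 then 0 else a i / b i)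
      (fun i hi => div_nonneg (hb i hi) hB.le)
      (by rw [← Finset.sum_div, div_self hBne])
      (fun i hi => by
        by_cases h : b i = 0
        · simp [h]
        · simp only [h, if_false, Set.mem_Ici]
          exact div_nonneg (ha i hi) (hb i hi))
    have hsum : ∑ i ∈ s, (b i / B) • (if b i = 0 then 0 else a i / b i) = A / B := by
      rw [hA, Finset.sum_div]
      refine Finset.sum_congr rfl fun i hi => ?_
      by_cases h : b i = 0
      · simp [h, hab i hi h]
      · simp only [h, if_false, smul_eq_mul]
        rw [div_mul_div_comm, mul_comm B (b i), mul_div_mul_left _ _ h]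
    have hrhs : ∑ i ∈ s, (b i / B) •
        (fun x : ℝ => x * Real.log x) (if b i = 0 then 0 else a i / b i)
        = (∑ i ∈ s, a i * Real.log (a i / b i)) / B := by
      rw [Finset.sum_div]
      refine Finset.sum_congr rfl fun i hi => ?_
      by_cases h : b i = 0
      · simp [h, hab i hi h]
      · simp only [h, if_false, smul_eq_mul]
        field_simp
    rw [hsum, hrhs] at hJ
    have := mul_le_mul_of_nonneg_right hJ hB.le
    rw [div_mul_cancel₀ _ hBne] at this
    calc A * Real.log (A / B) = A / B * Real.log (A / B) * B := by
          field_simp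
      _ ≤ _ := this

/-- Data processing inequality for stochastic matrices. -/
lemma KL_mapply_le {X : Type*} [Fintype X] (T : X → X → ℝ) (hT : IsStochastic T)
    (p q : X → ℝ) (hp : ∀ x, 0 ≤ p x) (hq : ∀ x, 0 ≤ q x) (hpq : AbsCont p q) :
    KL (mapply T p) (mapply T q) ≤ KL p q := by
  unfold KL mapply
  have step : ∀ x : X,
      (∑ x', T x x' * p x') * Real.log ((∑ x', T x x' * p x') / (∑ x', T x x' * q x'))
        ≤ ∑ x', T x x' * (p x' * Real.log (p x' / q x')) := by
    intro x
    have h := log_sum_ineq Finset.univ (fun x' => T x x' * p x') (fun x' => T x x' * q x')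
      (fun x' _ => mul_nonneg (hT.1 x x') (hp x'))
      (fun x' _ => mul_nonneg (hT.1 x x') (hq x'))
      (fun x' _ h0 => by
        rcases mul_eq_zero.1 h0 with h1 | h1
        · simp [h1]
        · simp [hpq x' h1])
    refine h.trans (le_of_eq (Finset.sum_congr rfl fun x' _ => ?_))
    by_cases hTx : T x x' = 0
    · simp [hTx]
    · rw [mul_div_mul_left _ _ hTx]; ring
  calc ∑ x, (∑ x', T x x' * p x') * Real.log ((∑ x', T x x' * p x') / (∑ x', T x x' * q x'))
      ≤ ∑ x, ∑ x', T x x' * (p x' * Real.log (p x' / q x')) :=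
        Finset.sum_le_sum fun x _ => step x
    _ = ∑ x', (∑ x, T x x') * (p x' * Real.log (p x' / q x')) := by
        rw [Finset.sum_comm]
        exact Finset.sum_congr rfl fun x' _ => (Finset.sum_mul _ _ _).symm
    _ = ∑ x', p x' * Real.log (p x' / q x') := by
        exact Finset.sum_congr rfl fun x' _ => by rw [hT.2 x', one_mul]

lemma mapply_isDist {X : Type*} [Fintype X] {T : X → X → ℝ} {p : X → ℝ}
    (hT : IsStochastic T) (hp : IsDist p) : IsDist (mapply T p) := by
  constructor
  · intro x
    exact Finset.sum_nonneg fun x' _ => mul_nonneg (hT.1 x x') (hp.1 x')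
  · unfold mapply
    rw [Finset.sum_comm]
    calc ∑ x', ∑ x, T x x' * p x' = ∑ x', (∑ x, T x x') * p x' := by
          exact Finset.sum_congr rfl fun x' _ => (Finset.sum_mul _ _ _).symm
      _ = ∑ x', p x' := Finset.sum_congr rfl fun x' _ => by rw [hT.2 x', one_mul]
      _ = 1 := hp.2

/-- (Discrete-time version of Theorem 2.) The total entropy production
of a constrained protocol decomposes into the drop of `D(p‖φ p)` (which is non-negative)
plus the entropy production of the projected trajectory. -/
theorem stmt4 {X : Type*} [Fintype X] [Nonempty X]
    (φ : (X → ℝ) → (X → ℝ))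
    (hφ : ∀ p, IsDist p → IsDist (φ p))
    (hpyth : Pythagorean φ)
    (hac : ∀ r, IsDist r → AbsCont r (φ r))
    (n : ℕ) (T : Fin n → X → X → ℝ)
    (hT : ∀ i, IsStochastic (T i))
    (hcomm : ∀ i (r : X → ℝ), IsDist r → φ (mapply (T i) r) = mapply (T i) (φ r))
    (π : Fin n → X → ℝ) (hπ : ∀ i, IsDist (π i))
    (hπim : ∀ i, ∃ r, IsDist r ∧ φ r = π i)
    (hπstat : ∀ i, mapply (T i) (π i) = π i)
    (p : X → ℝ) (hp : IsDist p)
    (traj : ℕ → X → ℝ)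
    (htraj0 : traj 0 = p)
    (htrajsucc : ∀ i : Fin n, traj (i + 1) = mapply (T i) (traj i)) :
    (∑ i : Fin n, (KL (traj i) (π i) - KL (traj (i + 1)) (π i)))
      = (KL (traj 0) (φ (traj 0)) - KL (traj n) (φ (traj n)))
        + ∑ i : Fin n, (KL (φ (traj i)) (π i) - KL (mapply (T i) (φ (traj i))) (π i))
    ∧ 0 ≤ KL (traj 0) (φ (traj 0)) - KL (traj n) (φ (traj n)) := by
  -- the trajectory consists of distributions
  have hdist : ∀ k, k ≤ n → IsDist (traj k) := by
    intro k
    induction k with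
    | zero => intro _; rw [htraj0]; exact hp
    | succ k ih =>
      intro hk
      have hk' : k < n := hk
      have h : traj (k + 1) = mapply (T ⟨k, hk'⟩) (traj k) := htrajsucc ⟨k, hk'⟩
      rw [h]
      exact mapply_isDist (hT _) (ih hk'.le)
  set g : ℕ → ℝ := fun k => KL (traj k) (φ (traj k)) with hg
  have hcommφ : ∀ i : Fin n, φ (traj (i + 1)) = mapply (T i) (φ (traj i)) := by
    intro i
    rw [htrajsucc i]
    exact hcomm i (traj i) (hdist i i.2.le)
  have key : ∀ i : Fin n,
      KL (traj i) (π i) - KL (traj (i + 1)) (π i)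
        = (g i - g (i + 1))
          + (KL (φ (traj i)) (π i) - KL (mapply (T i) (φ (traj i))) (π i)) := by
    intro i
    have hd : IsDist (traj i) := hdist i i.2.le
    have hd' : IsDist (traj (i + 1)) := hdist (i + 1) i.2
    have h1 := hpyth (traj i) (π i) hd (hπ i) (hπim i)
    have h2 := hpyth (traj (i + 1)) (π i) hd' (hπ i) (hπim i)
    rw [h1, h2]
    simp only [hg]
    rw [hcommφ i]
    ring
  have htel : ∑ i : Fin n, (g i - g (i + 1)) = g 0 - g n := by
    rw [Fin.sum_univ_eq_sum_range (fun k => g k - g (k + 1))]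
    exact Finset.sum_range_sub' g n
  have hstep : ∀ i : Fin n, g (i + 1) ≤ g i := by
    intro i
    have hd : IsDist (traj i) := hdist i i.2.le
    have hφd : IsDist (φ (traj i)) := hφ _ hd
    have : g (i + 1) = KL (mapply (T i) (traj i)) (mapply (T i) (φ (traj i))) := by
      rw [hg]
      simp only []
      rw [hcommφ i, htrajsucc i]
    rw [this]
    exact KL_mapply_le (T i) (hT i) (traj i) (φ (traj i)) hd.1 hφd.1 (hac _ hd)
  constructor
  · calc ∑ i : Fin n, (KL (traj i) (π i) - KL (traj (i + 1)) (π i))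
        = ∑ i : Fin n, ((g i - g (i + 1))
            + (KL (φ (traj i)) (π i) - KL (mapply (T i) (φ (traj i))) (π i))) :=
          Finset.sum_congr rfl fun i _ => key i
      _ = (∑ i : Fin n, (g i - g (i + 1)))
            + ∑ i : Fin n, (KL (φ (traj i)) (π i) - KL (mapply (T i) (φ (traj i))) (π i)) :=
          Finset.sum_add_distrib
      _ = _ := by rw [htel]
  · have : 0 ≤ g 0 - g n := by
      rw [← htel]
      exact Finset.sum_nonneg fun i _ => sub_nonneg.2 (hstep i)
    exact this
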